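/- Let 0 < γ < n, 0 ≤ β < 1, and let b be locally integrable. Then for every cube Q: (1/|Q|^{1+β/n}) ∫_Q |b(x) − b_Q| dx ≤ (2/|Q|^{1+β/n}) ∫_Q |b(x) − |Q|^{−γ/n} M_{γ,Q}(b)(x)| dx. -/

import Mathlib

open MeasureTheory ENNReal Set

noncomputable section

/-- An axis-parallel (closed) cube in `ℝⁿ`. -/
def IsCube (n : ℕ) (Q : Set (Fin n → ℝ)) : Prop :=
  ∃ (c : Fin n → ℝ) (h : ℝ), 0 < h ∧ Q = Set.univ.pi fun i => Set.Icc (c i) (c i + h)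

/-- The fractional maximal function `M_γ f (x) = sup_{Q ∋ x} |Q|^{γ/n-1} ∫_Q |f|`. -/
def fracMax (n : ℕ) (γ : ℝ) (f : (Fin n → ℝ) → ℝ) (x : Fin n → ℝ) : ℝ≥0∞ :=
  ⨆ (Q : Set (Fin n → ℝ)) (_ : IsCube n Q) (_ : x ∈ Q),
    volume Q ^ (γ / n - 1) * ∫⁻ y in Q, ‖f y‖₊

/-- The local fractional maximal function relative to a cube `Q₀`. -/
def localFracMax (n : ℕ) (γ : ℝ) (Q₀ : Set (Fin n → ℝ)) (f : (Fin n → ℝ) → ℝ)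
    (x : Fin n → ℝ) : ℝ≥0∞ :=
  ⨆ (Q : Set (Fin n → ℝ)) (_ : IsCube n Q) (_ : x ∈ Q) (_ : Q ⊆ Q₀),
    volume Q ^ (γ / n - 1) * ∫⁻ y in Q, ‖f y‖₊

/-- The maximal commutator `M_{α,b}`. -/
def maxComm (n : ℕ) (α : ℝ) (b f : (Fin n → ℝ) → ℝ) (x : Fin n → ℝ) : ℝ≥0∞ :=
  ⨆ (Q : Set (Fin n → ℝ)) (_ : IsCube n Q) (_ : x ∈ Q),
    volume Q ^ (α / n - 1) * ∫⁻ y in Q, (‖b x - b y‖₊ : ℝ≥0∞) * ‖f y‖₊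

/-- The nonlinear commutator `[b, M_α](f) = b · M_α(f) - M_α(b f)`. -/
def ncomm (n : ℕ) (α : ℝ) (b f : (Fin n → ℝ) → ℝ) (x : Fin n → ℝ) : ℝ :=
  b x * (fracMax n α f x).toReal - (fracMax n α (fun y => b y * f y) x).toReal

/-- Average of `b` over `Q`. -/
def cubeAvg (n : ℕ) (Q : Set (Fin n → ℝ)) (b : (Fin n → ℝ) → ℝ) : ℝ :=
  (volume Q).toReal⁻¹ * ∫ x in Q, b x

/-!
Since `b - b_Q` has mean zero on `Q`, its positive and negative parts have the same integral, so
`∫_Q |b - b_Q| = 2 ∫_Q (b_Q - b)⁺`. The cube `Q` itself is admissible in the supremum defining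
`M_{γ,Q}(b)(x)` for every `x ∈ Q`, whence `b_Q ≤ |Q|⁻¹ ∫_Q |b| ≤ |Q|^{-γ/n} M_{γ,Q}(b)(x)` and
`(b_Q - b(x))⁺ ≤ |b(x) - |Q|^{-γ/n} M_{γ,Q}(b)(x)|`.
-/

lemma ENNReal.ofReal_abs_eq_ofReal_add_ofReal_neg (r : ℝ) :
    ENNReal.ofReal |r| = ENNReal.ofReal r + ENNReal.ofReal (-r) := by
  rcases le_total 0 r with hr | hr
  · simp [abs_of_nonneg hr, ENNReal.ofReal_of_nonpos (neg_nonpos.2 hr)]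
  · simp [abs_of_nonpos hr, ENNReal.ofReal_of_nonpos hr]

namespace MeasureTheory

variable {α : Type*} [MeasurableSpace α] {μ : Measure α}

lemma lintegral_ofReal_abs_eq_two_mul_of_integral_eq_zero {g : α → ℝ} (hg : Integrable g μ)
    (h0 : ∫ x, g x ∂μ = 0) :
    ∫⁻ x, ENNReal.ofReal |g x| ∂μ = 2 * ∫⁻ x, ENNReal.ofReal (g x) ∂μ := by
  have hfin : ∀ u : α → ℝ, Integrable u μ → ∫⁻ x, ENNReal.ofReal (u x) ∂μ ≠ ⊤ := fun u hu =>
    ((lintegral_mono fun x => Real.ofReal_le_enorm (u x)).trans_lt hu.2).ne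
  have hbalance : ∫⁻ x, ENNReal.ofReal (-g x) ∂μ = ∫⁻ x, ENNReal.ofReal (g x) ∂μ := by
    rw [integral_eq_lintegral_pos_part_sub_lintegral_neg_part hg, sub_eq_zero] at h0
    exact (ENNReal.toReal_eq_toReal_iff' (hfin _ hg.neg) (hfin _ hg)).1 h0.symm
  simp_rw [ENNReal.ofReal_abs_eq_ofReal_add_ofReal_neg]
  rw [lintegral_add_left' hg.aemeasurable.ennreal_ofReal, hbalance, two_mul]

lemma ofReal_setAverage_le_inv_mul_lintegral (f : α → ℝ) (s : Set α) :
    ENNReal.ofReal ((μ s).toReal⁻¹ * ∫ x in s, f x ∂μ) ≤ (μ s)⁻¹ * ∫⁻ x in s, ‖f x‖ₑ ∂μ := by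
  rw [ENNReal.ofReal_mul (inv_nonneg.2 ENNReal.toReal_nonneg), ← ENNReal.toReal_inv]
  exact mul_le_mul' ENNReal.ofReal_toReal_le
    ((Real.ofReal_le_enorm _).trans (enorm_integral_le_lintegral_enorm f))

end MeasureTheory

lemma EReal.ofReal_sub_le_abs_sub {a r : ℝ} {m : ℝ≥0∞} (ham : ENNReal.ofReal a ≤ m) :
    ENNReal.ofReal (a - r) ≤ ((r : EReal) - (m : EReal)).abs := by
  rcases eq_or_ne m ⊤ with rfl | hm
  · simp
  rw [← EReal.coe_ennreal_toReal hm, ← EReal.coe_sub, EReal.abs_def, abs_sub_comm]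
  have ha := (ENNReal.ofReal_le_iff_le_toReal hm).1 ham
  exact ENNReal.ofReal_le_ofReal ((sub_le_sub_right ha r).trans (le_abs_self _))

namespace IsCube

variable {n : ℕ} {Q : Set (Fin n → ℝ)}

lemma measurableSet (hQ : IsCube n Q) : MeasurableSet Q := by
  obtain ⟨c, h, -, rfl⟩ := hQ
  exact MeasurableSet.univ_pi fun _ => measurableSet_Icc

lemma isCompact (hQ : IsCube n Q) : IsCompact Q := by
  obtain ⟨c, h, -, rfl⟩ := hQ
  exact isCompact_univ_pi fun _ => isCompact_Icc

lemma volume_eq (hQ : IsCube n Q) : ∃ h : ℝ, 0 < h ∧ volume Q = ENNReal.ofReal h ^ n := by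
  obtain ⟨c, h, hh, rfl⟩ := hQ
  exact ⟨h, hh, by rw [volume_pi_pi]; simp [Real.volume_Icc]⟩

lemma volume_ne_zero (hQ : IsCube n Q) : volume Q ≠ 0 := by
  obtain ⟨h, hh, hv⟩ := hQ.volume_eq
  simp [hv, hh]

lemma volume_ne_top (hQ : IsCube n Q) : volume Q ≠ ⊤ := by
  obtain ⟨h, -, hv⟩ := hQ.volume_eq
  simp [hv]

end IsCube

lemma inv_volume_mul_lintegral_le_localFracMax {n : ℕ} (γ : ℝ) {Q : Set (Fin n → ℝ)}
    (hQ : IsCube n Q) (b : (Fin n → ℝ) → ℝ) {x : Fin n → ℝ} (hx : x ∈ Q) :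
    (volume Q)⁻¹ * ∫⁻ y in Q, ‖b y‖ₑ ≤ volume Q ^ (-(γ / n)) * localFracMax n γ Q b x := by
  have hQ_le : volume Q ^ (γ / n - 1) * ∫⁻ y in Q, ‖b y‖₊ ≤ localFracMax n γ Q b x :=
    le_iSup₂_of_le Q hQ <| le_iSup₂_of_le hx subset_rfl le_rfl
  calc (volume Q)⁻¹ * ∫⁻ y in Q, ‖b y‖ₑ
      = volume Q ^ (-(γ / n)) * (volume Q ^ (γ / n - 1) * ∫⁻ y in Q, ‖b y‖₊) := by
        rw [← mul_assoc, ← ENNReal.rpow_add _ _ hQ.volume_ne_zero hQ.volume_ne_top,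
          show -(γ / n) + (γ / n - 1) = -1 by ring, ENNReal.rpow_neg_one]
        simp only [enorm_eq_nnnorm]
    _ ≤ volume Q ^ (-(γ / n)) * localFracMax n γ Q b x := by gcongr

lemma cubeAvg_eq_setAverage (n : ℕ) (Q : Set (Fin n → ℝ)) (b : (Fin n → ℝ) → ℝ) :
    cubeAvg n Q b = ⨍ x in Q, b x := by
  rw [cubeAvg, setAverage_eq, smul_eq_mul, measureReal_def]

lemma lintegral_abs_sub_cubeAvg_le {n : ℕ} (γ : ℝ) {b : (Fin n → ℝ) → ℝ}
    (hb : LocallyIntegrable b volume) {Q : Set (Fin n → ℝ)} (hQ : IsCube n Q) :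
    ∫⁻ x in Q, ENNReal.ofReal |b x - cubeAvg n Q b|
      ≤ 2 * ∫⁻ x in Q, ((b x : EReal) -
          ((volume Q ^ (-(γ / (n : ℝ))) * localFracMax n γ Q b x : ℝ≥0∞) : EReal)).abs := by
  have hbQ : IntegrableOn b Q := hb.integrableOn_isCompact hQ.isCompact
  have hmean : ∫ x in Q, (cubeAvg n Q b - b x) = 0 := by
    rw [cubeAvg_eq_setAverage]
    exact setIntegral_setAverage_sub hQ.volume_ne_top hbQ
  simp_rw [abs_sub_comm (b _)]
  rw [lintegral_ofReal_abs_eq_two_mul_of_integral_eq_zero (g := fun x => cubeAvg n Q b - b x)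
    ((integrableOn_const hQ.volume_ne_top).sub hbQ) hmean]
  gcongr 2 * ?_
  refine setLIntegral_mono' hQ.measurableSet fun x hx => EReal.ofReal_sub_le_abs_sub ?_
  exact (ofReal_setAverage_le_inv_mul_lintegral b Q).trans
    (inv_volume_mul_lintegral_le_localFracMax γ hQ b hx)

theorem stmt8_general (n : ℕ) (γ β : ℝ)
    (b : (Fin n → ℝ) → ℝ) (hb : LocallyIntegrable b volume)
    (Q : Set (Fin n → ℝ)) (hQ : IsCube n Q) :
    volume Q ^ (-(1 + β / (n : ℝ))) * ∫⁻ x in Q, ENNReal.ofReal |b x - cubeAvg n Q b|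
      ≤ 2 * (volume Q ^ (-(1 + β / (n : ℝ))) *
          ∫⁻ x in Q, ((b x : EReal) -
            ((volume Q ^ (-(γ / (n : ℝ))) * localFracMax n γ Q b x : ℝ≥0∞) : EReal)).abs) := by
  rw [mul_left_comm]
  gcongr
  exact lintegral_abs_sub_cubeAvg_le γ hb hQ

theorem stmt8 (n : ℕ) (γ β : ℝ) (hγ0 : 0 < γ) (hγn : γ < n)
    (hβ0 : 0 ≤ β) (hβ1 : β < 1)
    (b : (Fin n → ℝ) → ℝ) (hb : LocallyIntegrable b volume)
    (Q : Set (Fin n → ℝ)) (hQ : IsCube n Q) :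
    volume Q ^ (-(1 + β / (n : ℝ))) * ∫⁻ x in Q, ENNReal.ofReal |b x - cubeAvg n Q b|
      ≤ 2 * (volume Q ^ (-(1 + β / (n : ℝ))) *
          ∫⁻ x in Q, ((b x : EReal) -
            ((volume Q ^ (-(γ / (n : ℝ))) * localFracMax n γ Q b x : ℝ≥0∞) : EReal)).abs) :=
  stmt8_general n γ β b hb Q hQ
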